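/- arXiv:1009.5809 — 4 statements merged into one kernel-verified Lean document; each statement's English description precedes it below -/
import Mathlib

section
/- Let A be a Hermitian operator on ℂⁿ⊗ℂᵐ and let y = Σ_{i=1}^k xᵢ⊗yᵢ ∈ ℂⁿ⊗ℂᵐ satisfy ⟨y, Ay⟩ = 1 and Ay ∉ X⊗Y, where X = span{x₁,…,x_k} and Y = span{y₁,…,y_k}. Then there exist a unit product vector x = u⊗v ∈ ℂⁿ⊗ℂᵐ orthogonal to X⊗Y and a real number s ∈ (0,1) such that, with t = (1−s²)^{1/2}, one has ⟨sx + ty, A(sx + ty)⟩ > 1. -/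
open scoped ComplexOrder Matrix

/-- Tensor product `u ⊗ v` of vectors in `ℂⁿ` and `ℂᵐ`. -/
def vecTensor {n m : ℕ} (u : Fin n → ℂ) (v : Fin m → ℂ) : Fin n × Fin m → ℂ :=
  fun p => u p.1 * v p.2

/-- The subspace `X ⊗ Y` of `ℂⁿ ⊗ ℂᵐ` spanned by product vectors `u ⊗ v`, `u ∈ X`, `v ∈ Y`. -/
noncomputable def tensorSubmodule {n m : ℕ}
    (X : Submodule ℂ (Fin n → ℂ)) (Y : Submodule ℂ (Fin m → ℂ)) :
    Submodule ℂ (Fin n × Fin m → ℂ) :=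
  Submodule.span ℂ {w | ∃ u ∈ X, ∃ v ∈ Y, w = vecTensor u v}

/-! The orthogonal complement of `X ⊗ Y` is spanned by product vectors `u ⊗ v` with `u ⊥ X` or
`v ⊥ Y`, so `Ay ∉ X ⊗ Y` yields such a product vector with `⟨u ⊗ v, Ay⟩ ≠ 0`; a complex rescaling
turns it into a unit vector `x` with `⟨x, Ay⟩ = d > 0`. Then
`⟨sx + ty, A(sx + ty)⟩ = 1 + s² (⟨x, Ax⟩ - 1) + 2 s t d`, and the cross term, linear in `s`,
dominates for small `s > 0`. -/

open Matrix

lemma mem_of_forall_star_dotProduct_eq_zero {𝕜 ι : Type*} [RCLike 𝕜] [Fintype ι]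
    {X : Submodule 𝕜 (ι → 𝕜)} {c : ι → 𝕜}
    (h : ∀ u : ι → 𝕜, (∀ p ∈ X, star p ⬝ᵥ u = 0) → star u ⬝ᵥ c = 0) : c ∈ X := by
  let K : Submodule 𝕜 (EuclideanSpace 𝕜 ι) :=
    X.comap (WithLp.linearEquiv 2 𝕜 (ι → 𝕜)).toLinearMap
  have hc : WithLp.toLp 2 c ∈ Kᗮᗮ := by
    refine (Submodule.mem_orthogonal _ _).2 fun w hw => ?_
    rw [EuclideanSpace.inner_eq_star_dotProduct, dotProduct_comm]
    refine h _ fun p hp => ?_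
    have := (Submodule.mem_orthogonal _ _).1 hw (WithLp.toLp 2 p) hp
    rwa [EuclideanSpace.inner_eq_star_dotProduct, dotProduct_comm] at this
  rw [Submodule.orthogonal_orthogonal] at hc
  exact hc

lemma star_vecTensor_dotProduct_vecTensor {n m : ℕ} (p u : Fin n → ℂ) (q v : Fin m → ℂ) :
    star (vecTensor p q) ⬝ᵥ vecTensor u v = (star p ⬝ᵥ u) * (star q ⬝ᵥ v) := by
  simp only [dotProduct, Fintype.sum_prod_type, Finset.sum_mul_sum, Pi.star_apply, vecTensor,
    star_mul']
  exact Finset.sum_congr rfl fun _ _ => Finset.sum_congr rfl fun _ _ => by ring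

lemma star_vecTensor_single_right_dotProduct {n m : ℕ} (u : Fin n → ℂ) (j : Fin m)
    (P : Fin n × Fin m → ℂ) :
    star (vecTensor u (Pi.single j 1)) ⬝ᵥ P = star u ⬝ᵥ fun i => P (i, j) := by
  simp [dotProduct, Fintype.sum_prod_type, vecTensor, Pi.single_apply, apply_ite, ite_mul]

lemma star_vecTensor_single_left_dotProduct {n m : ℕ} (i : Fin n) (v : Fin m → ℂ)
    (P : Fin n × Fin m → ℂ) :
    star (vecTensor (Pi.single i 1) v) ⬝ᵥ P = star v ⬝ᵥ fun j => P (i, j) := by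
  simp [dotProduct, Fintype.sum_prod_type, vecTensor, Pi.single_apply, apply_ite, ite_mul]

section TensorSubmodule

variable {n m : ℕ} {X : Submodule ℂ (Fin n → ℂ)} {Y : Submodule ℂ (Fin m → ℂ)}

lemma star_dotProduct_vecTensor_eq_zero_of_mem_tensorSubmodule {u : Fin n → ℂ} {v : Fin m → ℂ}
    (h : (∀ p ∈ X, star p ⬝ᵥ u = 0) ∨ (∀ q ∈ Y, star q ⬝ᵥ v = 0))
    {w : Fin n × Fin m → ℂ} (hw : w ∈ tensorSubmodule X Y) : star w ⬝ᵥ vecTensor u v = 0 := by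
  induction hw using Submodule.span_induction with
  | mem w hw =>
    obtain ⟨p, hp, q, hq, rfl⟩ := hw
    rw [star_vecTensor_dotProduct_vecTensor]
    rcases h with h | h
    · rw [h p hp, zero_mul]
    · rw [h q hq, mul_zero]
  | zero => simp
  | add a b _ _ ha hb => rw [star_add, add_dotProduct, ha, hb, add_zero]
  | smul c a _ ha => rw [star_smul, smul_dotProduct, ha, smul_zero]

lemma mem_tensorSubmodule_of_forall_mem {P : Fin n × Fin m → ℂ}
    (hcol : ∀ j, (fun i => P (i, j)) ∈ X) (hrow : ∀ i, (fun j => P (i, j)) ∈ Y) :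
    P ∈ tensorSubmodule X Y := by
  obtain ⟨R, hR⟩ := LinearMap.exists_leftInverse_of_injective Y.subtype Y.ker_subtype
  have hRfix : ∀ q ∈ Y, (R q : Fin m → ℂ) = q := fun q hq =>
    congrArg Subtype.val (LinearMap.congr_fun hR ⟨q, hq⟩)
  -- apply the retraction `R` onto `Y` to each row of `P`, expanded in the standard basis
  have hP : P = ∑ j, vecTensor (fun i => P (i, j)) (R (Pi.single j 1) : Fin m → ℂ) := by
    funext ⟨i, l⟩
    have := congrFun (congrArg Subtype.val (R.pi_apply_eq_sum_univ fun j => P (i, j))) l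
    have hsingle : ∀ c : Fin m, (fun j => if c = j then (1 : ℂ) else 0) = Pi.single c 1 :=
      fun c => funext fun j => by simp only [Pi.single_apply, eq_comm]
    simp only [hRfix _ (hrow i), hsingle] at this
    simpa [vecTensor, Finset.sum_apply] using this
  rw [hP]
  exact Submodule.sum_mem _ fun j _ => Submodule.subset_span ⟨_, hcol j, _, (R _).2, rfl⟩

lemma mem_tensorSubmodule_of_forall_orthogonal {P : Fin n × Fin m → ℂ}
    (h : ∀ u v, (∀ w ∈ tensorSubmodule X Y, star w ⬝ᵥ vecTensor u v = 0) →
      star (vecTensor u v) ⬝ᵥ P = 0) :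
    P ∈ tensorSubmodule X Y := by
  refine mem_tensorSubmodule_of_forall_mem (fun j => ?_) (fun i => ?_)
  · refine mem_of_forall_star_dotProduct_eq_zero fun u hu => ?_
    rw [← star_vecTensor_single_right_dotProduct]
    exact h _ _ fun w => star_dotProduct_vecTensor_eq_zero_of_mem_tensorSubmodule (.inl hu)
  · refine mem_of_forall_star_dotProduct_eq_zero fun v hv => ?_
    rw [← star_vecTensor_single_left_dotProduct]
    exact h _ _ fun w => star_dotProduct_vecTensor_eq_zero_of_mem_tensorSubmodule (.inr hv)

end TensorSubmodule
lemma exists_one_lt_sq_mul_add_two_mul_sqrt_mul {a d : ℝ} (hd : 0 < d) :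
    ∃ s : ℝ, 0 < s ∧ s < 1 ∧ 1 < s ^ 2 * a + 2 * s * √(1 - s ^ 2) * d + (1 - s ^ 2) := by
  set s := min (1 / 2) (d / (1 + |a - 1|))
  have hs0 : 0 < s := lt_min (by norm_num) (by positivity)
  have hs_half : s ≤ 1 / 2 := min_le_left _ _
  have hs_small : s * (1 + |a - 1|) ≤ d := (le_div_iff₀ (by positivity)).1 (min_le_right _ _)
  have ht : 1 / 2 ≤ √(1 - s ^ 2) := Real.le_sqrt_of_sq_le (by nlinarith)
  refine ⟨s, hs0, by linarith, ?_⟩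
  have hlin : 0 < (a - 1) * s + 2 * √(1 - s ^ 2) * d := by
    nlinarith [neg_abs_le (a - 1), mul_le_mul_of_nonneg_right ht hd.le]
  nlinarith [mul_pos hs0 hlin]

lemma exists_smul_star_dotProduct_self_eq_one_and_pos {ι : Type*} [Fintype ι] {w b : ι → ℂ}
    (h : star w ⬝ᵥ b ≠ 0) :
    ∃ γ : ℂ, star (γ • w) ⬝ᵥ (γ • w) = 1 ∧ 0 < star (γ • w) ⬝ᵥ b := by
  set c := star w ⬝ᵥ b
  have hw : 0 < star w ⬝ᵥ w := dotProduct_star_self_pos_iff.2 fun h0 => h (by simp [c, h0])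
  obtain ⟨hr, him⟩ := Complex.pos_iff.1 hw
  set r := (star w ⬝ᵥ w).re
  have hN : star w ⬝ᵥ w = (r : ℂ) := Complex.ext rfl him.symm
  have hc : 0 < ‖c‖ := norm_pos_iff.2 h
  set t := (‖c‖ * √r)⁻¹
  refine ⟨(t : ℂ) * c, ?_, ?_⟩
  · rw [star_smul, smul_dotProduct, dotProduct_smul, hN, smul_eq_mul, smul_eq_mul, star_mul',
      Complex.star_def, Complex.conj_ofReal, ← mul_assoc, mul_mul_mul_comm, Complex.conj_mul']
    have hsqrt : √r ^ 2 = r := Real.sq_sqrt hr.le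
    have hunit : t * t * ‖c‖ ^ 2 * r = 1 := by
      simp only [t]
      field_simp
      rw [hsqrt]
    exact_mod_cast hunit
  · rw [star_smul, smul_dotProduct, smul_eq_mul, star_mul', Complex.star_def, Complex.conj_ofReal,
      mul_assoc, Complex.conj_mul']
    exact_mod_cast mul_pos (inv_pos.2 (mul_pos hc (Real.sqrt_pos.2 hr))) (pow_pos hc 2)

lemma star_dotProduct_mulVec_smul_add_smul {ι : Type*} [Fintype ι] {A : Matrix ι ι ℂ}
    (hA : A.IsHermitian) (x y : ι → ℂ) (s t : ℝ) :
    star ((s : ℂ) • x + (t : ℂ) • y) ⬝ᵥ A *ᵥ ((s : ℂ) • x + (t : ℂ) • y) =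
      s ^ 2 * (star x ⬝ᵥ A *ᵥ x) + s * t * (star x ⬝ᵥ A *ᵥ y + star (star x ⬝ᵥ A *ᵥ y)) +
        t ^ 2 * (star y ⬝ᵥ A *ᵥ y) := by
  have hyx : star y ⬝ᵥ A *ᵥ x = star (star x ⬝ᵥ A *ᵥ y) := by
    rw [← star_dotProduct, star_mulVec, hA.eq, dotProduct_mulVec]
  simp only [mulVec_add, mulVec_smul, star_add, star_smul, add_dotProduct, dotProduct_add,
    smul_dotProduct, dotProduct_smul, smul_eq_mul, hyx, Complex.star_def, Complex.conj_ofReal]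
  ring

lemma exists_one_lt_star_dotProduct_mulVec {ι : Type*} [Fintype ι] {A : Matrix ι ι ℂ}
    (hA : A.IsHermitian) {x y : ι → ℂ} (hy : star y ⬝ᵥ A *ᵥ y = 1)
    (hxy : 0 < star x ⬝ᵥ A *ᵥ y) :
    ∃ s : ℝ, 0 < s ∧ s < 1 ∧
      1 < star ((s : ℂ) • x + (√(1 - s ^ 2) : ℂ) • y) ⬝ᵥ
        A *ᵥ ((s : ℂ) • x + (√(1 - s ^ 2) : ℂ) • y) := by
  obtain ⟨hd, hd_im⟩ := Complex.pos_iff.1 hxy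
  set d := (star x ⬝ᵥ A *ᵥ y).re
  set a := (star x ⬝ᵥ A *ᵥ x).re
  have hd_re : star x ⬝ᵥ A *ᵥ y = (d : ℂ) := Complex.ext rfl hd_im.symm
  have ha_re : star x ⬝ᵥ A *ᵥ x = (a : ℂ) := Complex.ext rfl (hA.im_star_dotProduct_mulVec_self x)
  obtain ⟨s, hs0, hs1, hlt⟩ := exists_one_lt_sq_mul_add_two_mul_sqrt_mul (a := a) hd
  refine ⟨s, hs0, hs1, ?_⟩
  have ht : √(1 - s ^ 2) ^ 2 = 1 - s ^ 2 := Real.sq_sqrt (by nlinarith)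
  have hlt' : 1 < s ^ 2 * a + s * √(1 - s ^ 2) * (d + d) + √(1 - s ^ 2) ^ 2 * 1 := by
    rw [ht]; linarith
  rw [star_dotProduct_mulVec_smul_add_smul hA, hy, hd_re, ha_re, Complex.star_def,
    Complex.conj_ofReal]
  exact_mod_cast hlt'

theorem exists_product_vector_gt_one_general {n m k : ℕ}
    (A : Matrix (Fin n × Fin m) (Fin n × Fin m) ℂ) (hA : A.IsHermitian)
    (y : Fin n × Fin m → ℂ) (x : Fin k → Fin n → ℂ) (z : Fin k → Fin m → ℂ)
    (h1 : star y ⬝ᵥ A.mulVec y = 1)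
    (hnot : A.mulVec y ∉
      tensorSubmodule (Submodule.span ℂ (Set.range x)) (Submodule.span ℂ (Set.range z))) :
    ∃ (u : Fin n → ℂ) (v : Fin m → ℂ) (s : ℝ),
      star (vecTensor u v) ⬝ᵥ vecTensor u v = 1 ∧
      (∀ w ∈ tensorSubmodule (Submodule.span ℂ (Set.range x))
          (Submodule.span ℂ (Set.range z)), star w ⬝ᵥ vecTensor u v = 0) ∧
      0 < s ∧ s < 1 ∧
      1 < star ((s : ℂ) • vecTensor u v + (Real.sqrt (1 - s ^ 2) : ℂ) • y) ⬝ᵥ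
            A.mulVec ((s : ℂ) • vecTensor u v + (Real.sqrt (1 - s ^ 2) : ℂ) • y) := by
  obtain ⟨u, v, hperp, hne⟩ : ∃ u v,
      (∀ w ∈ tensorSubmodule (Submodule.span ℂ (Set.range x)) (Submodule.span ℂ (Set.range z)),
        star w ⬝ᵥ vecTensor u v = 0) ∧ star (vecTensor u v) ⬝ᵥ A *ᵥ y ≠ 0 := by
    by_contra! h
    exact hnot (mem_tensorSubmodule_of_forall_orthogonal h)
  obtain ⟨γ, hunit, hpos⟩ := exists_smul_star_dotProduct_self_eq_one_and_pos hne
  have hγ : γ • vecTensor u v = vecTensor (γ • u) v := by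
    funext p
    simp [vecTensor, mul_assoc]
  rw [hγ] at hunit hpos
  obtain ⟨s, hs0, hs1, hlt⟩ := exists_one_lt_star_dotProduct_mulVec hA h1 hpos
  refine ⟨γ • u, v, s, hunit, fun w hw => ?_, hs0, hs1, hlt⟩
  rw [← hγ, dotProduct_smul, hperp w hw, smul_zero]

/-- **Lemma 5** (Størmer): if `A` is Hermitian on `ℂⁿ ⊗ ℂᵐ`, `y = Σ_{i=1}^k xᵢ ⊗ yᵢ`
satisfies `⟨y, Ay⟩ = 1` and `Ay ∉ X ⊗ Y` (with `X = span xᵢ`, `Y = span yᵢ`), then there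
are a unit product vector `x = u ⊗ v ⊥ X ⊗ Y` and `s ∈ (0,1)` such that, with
`t = (1-s²)^{1/2}`, one has `⟨sx + ty, A(sx + ty)⟩ > 1`. -/
theorem exists_product_vector_gt_one {n m k : ℕ}
    (A : Matrix (Fin n × Fin m) (Fin n × Fin m) ℂ) (hA : A.IsHermitian)
    (y : Fin n × Fin m → ℂ) (x : Fin k → Fin n → ℂ) (z : Fin k → Fin m → ℂ)
    (hy : y = ∑ i, vecTensor (x i) (z i))
    (h1 : star y ⬝ᵥ A.mulVec y = 1)
    (hnot : A.mulVec y ∉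
      tensorSubmodule (Submodule.span ℂ (Set.range x)) (Submodule.span ℂ (Set.range z))) :
    ∃ (u : Fin n → ℂ) (v : Fin m → ℂ) (s : ℝ),
      star (vecTensor u v) ⬝ᵥ vecTensor u v = 1 ∧
      (∀ w ∈ tensorSubmodule (Submodule.span ℂ (Set.range x))
          (Submodule.span ℂ (Set.range z)), star w ⬝ᵥ vecTensor u v = 0) ∧
      0 < s ∧ s < 1 ∧
      1 < star ((s : ℂ) • vecTensor u v + (Real.sqrt (1 - s ^ 2) : ℂ) • y) ⬝ᵥ
            A.mulVec ((s : ℂ) • vecTensor u v + (Real.sqrt (1 - s ^ 2) : ℂ) • y) :=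
  exists_product_vector_gt_one_general A hA y x z h1 hnot
end

section
/- The Choi map φ : M₃(ℂ) → M₃(ℂ), defined by φ((x_{ij})) = [[x₁₁ + x₃₃, −x₁₂, −x₁₃], [−x₂₁, x₁₁ + x₂₂, −x₂₃], [−x₃₁, −x₃₂, x₂₂ + x₃₃]], is a positive map, i.e., φ(x) is positive semidefinite whenever x ∈ M₃(ℂ) is positive semidefinite. -/
open scoped ComplexOrder Matrix

/-- The Choi map `φ` on `M₃(ℂ)`, sending `(x_{ij})` to the matrix with diagonal entries
`x₁₁+x₃₃, x₁₁+x₂₂, x₂₂+x₃₃` and off-diagonal entries `-x_{ij}`. -/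
def choiMap : Matrix (Fin 3) (Fin 3) ℂ →ₗ[ℂ] Matrix (Fin 3) (Fin 3) ℂ where
  toFun x :=
    !![x 0 0 + x 2 2, -x 0 1, -x 0 2;
       -x 1 0, x 0 0 + x 1 1, -x 1 2;
       -x 2 0, -x 2 1, x 1 1 + x 2 2]
  map_add' x y := by
    ext i j
    fin_cases i <;> fin_cases j <;>
      simp [Matrix.add_apply] <;> ring
  map_smul' c x := by
    ext i j
    fin_cases i <;> fin_cases j <;>
      simp [Matrix.smul_apply] <;> ring

/-!
For positive semidefinite `x` one has `|x i j| ≤ √(x i i) √(x j j)`, so the real part of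
`v* φ(x) v` is bounded below by Choi's biquadratic form `F(p, q) = pᵀ φ(q qᵀ) p` at
`p i = |v i|`, `q i = √(x i i)`. Choi's form is nonnegative without being a sum of squares;
Gaussian elimination in `p` shows that, multiplied by the two leading principal minors of
`φ(q qᵀ)`, it becomes one.
-/

theorem choi_biquadratic_nonneg (p₀ p₁ p₂ q₀ q₁ q₂ : ℝ) :
    0 ≤ (q₀ ^ 2 + q₂ ^ 2) * p₀ ^ 2 + (q₀ ^ 2 + q₁ ^ 2) * p₁ ^ 2 + (q₁ ^ 2 + q₂ ^ 2) * p₂ ^ 2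
      - 2 * (q₀ * q₁ * p₀ * p₁ + q₀ * q₂ * p₀ * p₂ + q₁ * q₂ * p₁ * p₂) := by
  rcases eq_or_ne q₀ 0 with rfl | hq₀
  · nlinarith [sq_nonneg (q₂ * p₀), sq_nonneg (q₁ * p₂), sq_nonneg (q₁ * p₁ - q₂ * p₂)]
  set D := q₀ ^ 2 + q₂ ^ 2
  set A := q₀ ^ 4 + q₀ ^ 2 * q₂ ^ 2 + q₁ ^ 2 * q₂ ^ 2
  refine nonneg_of_mul_nonneg_right ?_ (mul_pos (by positivity : 0 < D) (by positivity : 0 < A))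
  -- `det φ(q qᵀ) = q₀⁴q₁² + q₁⁴q₂² + q₂⁴q₀² - 3q₀²q₁²q₂²` is nonnegative only by AM-GM,
  -- but `D * det φ(q qᵀ)` is the sum of the last three squares.
  have h : 0 ≤ A * (D * p₀ - q₀ * q₁ * p₁ - q₀ * q₂ * p₂) ^ 2
      + (A * p₁ - q₁ * q₂ * (2 * q₀ ^ 2 + q₂ ^ 2) * p₂) ^ 2
      + ((q₀ * q₁ * (q₀ ^ 2 - q₂ ^ 2)) ^ 2 + (q₂ ^ 2 * (q₀ ^ 2 - q₁ ^ 2)) ^ 2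
        + (q₀ * q₂ * (q₁ ^ 2 - q₂ ^ 2)) ^ 2) * p₂ ^ 2 := by
    positivity
  linear_combination h

namespace Matrix

open RCLike

variable {𝕜 n : Type*} [RCLike 𝕜]

theorem PosSemidef.norm_apply_le_sqrt_mul_sqrt {A : Matrix n n 𝕜} (hA : A.PosSemidef) (i j : n) :
    ‖A i j‖ ≤ √(re (A i i)) * √(re (A j j)) := by
  have hdet := (hA.submatrix ![i, j]).det_nonneg
  simp only [det_fin_two, Fin.isValue, submatrix_apply, cons_val_zero, cons_val_one] at hdet
  have hre : ∀ k, 0 ≤ re (A k k) := fun k => (nonneg_iff.1 hA.diag_nonneg).1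
  rw [← Real.sqrt_mul (hre i), Real.le_sqrt (norm_nonneg _) (mul_nonneg (hre i) (hre j))]
  rwa [← hA.isHermitian.coe_re_apply_self i, ← hA.isHermitian.coe_re_apply_self j,
    ← hA.isHermitian.apply j i, star_def, RCLike.mul_conj, ← ofReal_pow, ← ofReal_mul, sub_nonneg,
    ofReal_le_ofReal] at hdet

variable [Fintype n]

theorem PosSemidef.of_re_dotProduct_mulVec_nonneg {A : Matrix n n 𝕜} (hA : A.IsHermitian)
    (h : ∀ v, 0 ≤ re (star v ⬝ᵥ A *ᵥ v)) : A.PosSemidef :=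
  .of_dotProduct_mulVec_nonneg hA fun v => nonneg_iff.2 ⟨h v, hA.im_star_dotProduct_mulVec_self v⟩

theorem dotProduct_mulVec_norm_le_re_dotProduct_mulVec {H : Matrix n n 𝕜} {c : Matrix n n ℝ}
    (hdiag : ∀ i, c i i ≤ re (H i i)) (hoff : ∀ i j, i ≠ j → ‖H i j‖ ≤ -c i j) (v : n → 𝕜) :
    (fun i => ‖v i‖) ⬝ᵥ c *ᵥ (fun i => ‖v i‖) ≤ re (star v ⬝ᵥ H *ᵥ v) := by
  simp only [dotProduct, mulVec, Finset.mul_sum, map_sum]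
  refine Finset.sum_le_sum fun i _ => Finset.sum_le_sum fun j _ => ?_
  rcases eq_or_ne i j with rfl | hij
  · calc ‖v i‖ * (c i i * ‖v i‖) = c i i * ‖v i‖ ^ 2 := by ring
      _ ≤ re (H i i) * ‖v i‖ ^ 2 := by gcongr; exact hdiag i
      _ = re (star v i * (H i i * v i)) := by
        rw [Pi.star_apply, star_def, mul_left_comm, RCLike.conj_mul, ← ofReal_pow, re_mul_ofReal]
  · calc ‖v i‖ * (c i j * ‖v j‖) ≤ -(‖v i‖ * (‖H i j‖ * ‖v j‖)) := by
          have := hoff i j hij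
          nlinarith [mul_nonneg (norm_nonneg (v i)) (norm_nonneg (v j))]
      _ = -‖star v i * (H i j * v j)‖ := by simp only [norm_mul, Pi.star_apply, norm_star]
      _ ≤ re (star v i * (H i j * v j)) := neg_le_of_abs_le (abs_re_le_norm _)

end Matrix

theorem choiMap_apply (x : Matrix (Fin 3) (Fin 3) ℂ) (i j : Fin 3) :
    choiMap x i j = if i = j then x i i + x (i - 1) (i - 1) else -x i j := by
  fin_cases i <;> fin_cases j <;> first | rfl | exact add_comm _ _

theorem choiMap_conjTranspose (x : Matrix (Fin 3) (Fin 3) ℂ) : (choiMap x)ᴴ = choiMap xᴴ := by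
  ext i j
  simp only [Matrix.conjTranspose_apply, choiMap_apply]
  split_ifs <;> simp_all [eq_comm]

theorem choiMap_isHermitian {x : Matrix (Fin 3) (Fin 3) ℂ} (hx : x.IsHermitian) :
    (choiMap x).IsHermitian := by
  rw [Matrix.IsHermitian, choiMap_conjTranspose, hx]

/-- The Choi map is a positive map: it sends positive semidefinite matrices to
positive semidefinite matrices. -/
theorem choiMap_isPositiveMap :
    ∀ x : Matrix (Fin 3) (Fin 3) ℂ, x.PosSemidef → (choiMap x).PosSemidef := by
  intro x hx
  refine .of_re_dotProduct_mulVec_nonneg (choiMap_isHermitian hx.isHermitian) fun v => ?_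
  set q : Fin 3 → ℝ := fun i => √(x i i).re
  set p : Fin 3 → ℝ := fun i => ‖v i‖
  have hq : ∀ i, q i ^ 2 = (x i i).re := fun i =>
    Real.sq_sqrt (RCLike.nonneg_iff.1 hx.diag_nonneg).1
  calc 0 ≤ (q 0 ^ 2 + q 2 ^ 2) * p 0 ^ 2 + (q 0 ^ 2 + q 1 ^ 2) * p 1 ^ 2
        + (q 1 ^ 2 + q 2 ^ 2) * p 2 ^ 2
        - 2 * (q 0 * q 1 * p 0 * p 1 + q 0 * q 2 * p 0 * p 2 + q 1 * q 2 * p 1 * p 2) :=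
      choi_biquadratic_nonneg ..
    _ = p ⬝ᵥ (fun i j => if i = j then q i ^ 2 + q (i - 1) ^ 2 else -(q i * q j)) *ᵥ p := by
      simp only [dotProduct, Matrix.mulVec, Fin.sum_univ_three, Fin.isValue, ite_mul, neg_mul,
        ↓reduceIte, Fin.reduceEq, Fin.reduceSub, zero_sub, show (-1 : Fin 3) = 2 from rfl]
      ring
    _ ≤ RCLike.re (star v ⬝ᵥ choiMap x *ᵥ v) := by
      refine Matrix.dotProduct_mulVec_norm_le_re_dotProduct_mulVec (fun i => ?_) (fun i j hij => ?_) v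
      · simp [choiMap_apply, hq]
      · simpa [choiMap_apply, hij] using hx.norm_apply_le_sqrt_mul_sqrt i j
end

section
/- The Choi map φ : M₃(ℂ) → M₃(ℂ), defined by φ((x_{ij})) = [[x₁₁ + x₃₃, −x₁₂, −x₁₃], [−x₂₁, x₁₁ + x₂₂, −x₂₃], [−x₃₁, −x₃₂, x₂₂ + x₃₃]], is not 2-positive, i.e., φ⊗ι₂ : M₃(ℂ)⊗M₂(ℂ) → M₃(ℂ)⊗M₂(ℂ) does not map positive semidefinite matrices to positive semidefinite matrices. -/
open scoped ComplexOrder Matrix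

/-- The map `φ ⊗ ι_k` on `Mₙ ⊗ M_k`, in block form. -/
def mapTensorId {n m : ℕ} (k : ℕ)
    (φ : Matrix (Fin n) (Fin n) ℂ →ₗ[ℂ] Matrix (Fin m) (Fin m) ℂ)
    (A : Matrix (Fin n × Fin k) (Fin n × Fin k) ℂ) :
    Matrix (Fin m × Fin k) (Fin m × Fin k) ℂ :=
  fun p q => φ (Matrix.of fun i j => A (i, p.2) (j, q.2)) p.1 q.1

/-- `φ` is k-positive if `φ ⊗ ι_k` maps positive semidefinite matrices to
positive semidefinite matrices. -/
def IsKPositive {n m : ℕ} (k : ℕ)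
    (φ : Matrix (Fin n) (Fin n) ℂ →ₗ[ℂ] Matrix (Fin m) (Fin m) ℂ) : Prop :=
  ∀ A : Matrix (Fin n × Fin k) (Fin n × Fin k) ℂ, A.PosSemidef → (mapTensorId k φ A).PosSemidef

/-! Test 2-positivity on the rank-one positive matrix `v v*`, where `v ∈ ℂ³ ⊗ ℂ²` has the blocks
`v₀ = (1, 1, 1)` and `v₁ = (1, 1, -1)`. Write `φ(x) = Δ(x) - x` with
`Δ(x) = diag(2x₁₁ + x₃₃, x₁₁ + 2x₂₂, x₂₂ + 2x₃₃)`. In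
`⟨v, (φ ⊗ ι₂)(v v*) v⟩ = ∑_{a,b} ⟨v_a, φ(v_a v_b*) v_b⟩` the term `-x` contributes
`-(‖v₀‖² + ‖v₁‖²)² = -36` and `Δ` contributes `9 + 9 + 5 + 5 = 28`, so the form takes the
value `-8`. -/

open Matrix

lemma dotProduct_mapTensorId_mulVec {n m k : ℕ}
    (φ : Matrix (Fin n) (Fin n) ℂ →ₗ[ℂ] Matrix (Fin m) (Fin m) ℂ)
    (A : Matrix (Fin n × Fin k) (Fin n × Fin k) ℂ) (w w' : Fin m × Fin k → ℂ) :
    star w ⬝ᵥ mapTensorId k φ A *ᵥ w' =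
      ∑ a, ∑ b, star (fun i => w (i, a)) ⬝ᵥ
        φ (of fun i j => A (i, a) (j, b)) *ᵥ fun j => w' (j, b) := by
  simp only [dotProduct, mulVec, mapTensorId, Fintype.sum_prod_type, Finset.mul_sum,
    Pi.star_apply]
  rw [Finset.sum_comm]
  exact Finset.sum_congr rfl fun _ _ => Finset.sum_comm_cycle

lemma IsKPositive.dotProduct_mulVec_vecMulVec_nonneg {n m k : ℕ}
    {φ : Matrix (Fin n) (Fin n) ℂ →ₗ[ℂ] Matrix (Fin m) (Fin m) ℂ} (hφ : IsKPositive k φ)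
    (v : Fin n × Fin k → ℂ) (w : Fin m × Fin k → ℂ) :
    0 ≤ star w ⬝ᵥ mapTensorId k φ (vecMulVec v (star v)) *ᵥ w :=
  (hφ _ (posSemidef_vecMulVec_self_star v)).dotProduct_mulVec_nonneg w

def choiWitness : Fin 3 × Fin 2 → ℂ := fun p => ![![1, 1, 1], ![1, 1, -1]] p.2 p.1

lemma choiWitness_dotProduct_mapTensorId_mulVec :
    star choiWitness ⬝ᵥ
      mapTensorId 2 choiMap (vecMulVec choiWitness (star choiWitness)) *ᵥ choiWitness = -8 := by
  rw [dotProduct_mapTensorId_mulVec]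
  simp [Fin.sum_univ_succ, choiWitness, choiMap, vecMulVec, dotProduct, mulVec]
  norm_num

/-- The Choi map is not 2-positive. -/
theorem choiMap_not_two_positive : ¬ IsKPositive 2 choiMap := fun h => by
  have := h.dotProduct_mulVec_vecMulVec_nonneg choiWitness choiWitness
  rw [choiWitness_dotProduct_mapTensorId_mulVec] at this
  norm_num at this
end

section
/- The Choi map φ : M₃(ℂ) → M₃(ℂ), defined by φ((x_{ij})) = [[x₁₁ + x₃₃, −x₁₂, −x₁₃], [−x₂₁, x₁₁ + x₂₂, −x₂₃], [−x₃₁, −x₃₂, x₂₂ + x₃₃]], is atomic: it cannot be written as φ = φ₁ + φ₂ where φ₁ : M₃(ℂ) → M₃(ℂ) is 2-positive and φ₂ : M₃(ℂ) → M₃(ℂ) is 2-copositive. -/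
/-!
If `φ = φ₁ + φ₂` with `φ₁` and `t ∘ φ₂` 2-positive, then the Choi forms `⟨v, C_ψ v⟩` of
`ψ = φ₁` and of `ψ = t ∘ φ₂` are nonnegative at every tensor `v` of Schmidt rank at most 2.
Take `X = ∑ₐ |vₐ⟩⟨vₐ|` for ten tensors `vₐ` of Schmidt rank ≤ 2 whose partial transpose is
again `∑_b |w_b⟩⟨w_b|` for nine such tensors `w_b`. Then `⟨X, C_{φ₁}⟩ ≥ 0` and
`⟨X, C_{φ₂}⟩ = ⟨Xᵀᴮ, C_{t ∘ φ₂}⟩ ≥ 0`, whereas `⟨X, C_φ⟩ = -9` for the Choi map.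
-/

open scoped ComplexOrder Matrix

/-- The transpose map on `Mₘ(ℂ)` as a linear map. -/
def transposeMap (m : ℕ) : Matrix (Fin m) (Fin m) ℂ →ₗ[ℂ] Matrix (Fin m) (Fin m) ℂ where
  toFun x := x.transpose
  map_add' x y := Matrix.transpose_add x y
  map_smul' c x := Matrix.transpose_smul c x

open Matrix

variable {n m : ℕ}

/-- `⟨v, C_ψ v⟩` for the Choi matrix `C_ψ = ∑ E_ij ⊗ ψ(E_ij)`, a vector of `ℂⁿ ⊗ ℂᵐ` being
written as the `n × m` matrix `v`. -/
def choiForm (ψ : Matrix (Fin n) (Fin n) ℂ →ₗ[ℂ] Matrix (Fin m) (Fin m) ℂ)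
    (v : Matrix (Fin n) (Fin m) ℂ) : ℂ :=
  ∑ i, ∑ j, ∑ k, ∑ l, v i k * star (v j l) * ψ (single i j 1) k l

lemma choiForm_add (ψ₁ ψ₂ : Matrix (Fin n) (Fin n) ℂ →ₗ[ℂ] Matrix (Fin m) (Fin m) ℂ)
    (v : Matrix (Fin n) (Fin m) ℂ) :
    choiForm (ψ₁ + ψ₂) v = choiForm ψ₁ v + choiForm ψ₂ v := by
  simp only [choiForm, LinearMap.add_apply, Matrix.add_apply, mul_add, Finset.sum_add_distrib]

lemma LinearMap.apply_of_apply_eq_sum_single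
    (ψ : Matrix (Fin n) (Fin n) ℂ →ₗ[ℂ] Matrix (Fin m) (Fin m) ℂ)
    (c : Fin n → Fin n → ℂ) (k l : Fin m) :
    ψ (of c) k l = ∑ i, ∑ j, c i j * ψ (Matrix.single i j 1) k l := by
  conv_lhs => rw [matrix_eq_sum_single (of c)]
  simp only [map_sum, Matrix.sum_apply, of_apply]
  refine Finset.sum_congr rfl fun i _ => Finset.sum_congr rfl fun j _ => ?_
  rw [show Matrix.single i j (c i j) = c i j • Matrix.single i j (1 : ℂ) by
    rw [Matrix.smul_single, smul_eq_mul, mul_one], map_smul]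
  rfl

lemma star_dotProduct_mapTensorId_vecMulVec_mulVec {k : ℕ}
    (ψ : Matrix (Fin n) (Fin n) ℂ →ₗ[ℂ] Matrix (Fin m) (Fin m) ℂ)
    (u : Matrix (Fin n) (Fin k) ℂ) (z : Matrix (Fin m) (Fin k) ℂ) :
    star (fun p : Fin m × Fin k => z p.1 p.2) ⬝ᵥ
      mapTensorId k ψ (vecMulVec (fun p => u p.1 p.2) (star fun p => u p.1 p.2)) *ᵥ
        (fun p => z p.1 p.2) = choiForm ψ (u * zᴴ) := by
  simp only [choiForm, mul_apply, conjTranspose_apply, star_sum, star_mul', star_star,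
    Finset.sum_mul_sum]
  simp only [dotProduct, mulVec, mapTensorId, vecMulVec, LinearMap.apply_of_apply_eq_sum_single,
    of_apply, Pi.star_apply, Fintype.sum_prod_type, Finset.mul_sum, Finset.sum_mul]
  -- sorts the six sums on both sides by type, into `Fin n, Fin n, Fin m, Fin m, Fin k, Fin k`
  simp only [Finset.sum_comm (γ := Fin k) (α := Fin n), Finset.sum_comm (γ := Fin m) (α := Fin n),
    Finset.sum_comm (γ := Fin k) (α := Fin m)]
  simp only [mul_comm, mul_assoc, mul_left_comm]

/-- The tensors `u * zᴴ` are exactly those of Schmidt rank at most `k`. -/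
theorem IsKPositive.choiForm_mul_conjTranspose_nonneg {k : ℕ}
    {ψ : Matrix (Fin n) (Fin n) ℂ →ₗ[ℂ] Matrix (Fin m) (Fin m) ℂ} (hψ : IsKPositive k ψ)
    (u : Matrix (Fin n) (Fin k) ℂ) (z : Matrix (Fin m) (Fin k) ℂ) :
    0 ≤ choiForm ψ (u * zᴴ) :=
  star_dotProduct_mapTensorId_vecMulVec_mulVec ψ u z ▸
    (hψ _ (posSemidef_vecMulVec_self_star _)).dotProduct_mulVec_nonneg _

theorem not_exists_kPositive_add_kCopositive_of_witness {ι κ : Type*}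
    [Fintype ι] [Fintype κ] {k : ℕ} (φ : Matrix (Fin n) (Fin n) ℂ →ₗ[ℂ] Matrix (Fin m) (Fin m) ℂ)
    (u : ι → Matrix (Fin n) (Fin k) ℂ) (z : ι → Matrix (Fin m) (Fin k) ℂ)
    (u' : κ → Matrix (Fin n) (Fin k) ℂ) (z' : κ → Matrix (Fin m) (Fin k) ℂ)
    (h_partialTranspose : ∀ ψ, ∑ a, choiForm ψ (u a * (z a)ᴴ) =
      ∑ b, choiForm (transposeMap m ∘ₗ ψ) (u' b * (z' b)ᴴ))
    (hφ : ∑ a, choiForm φ (u a * (z a)ᴴ) < 0) :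
    ¬ ∃ φ₁ φ₂, IsKPositive k φ₁ ∧ IsKPositive k (transposeMap m ∘ₗ φ₂) ∧ φ = φ₁ + φ₂ := by
  rintro ⟨φ₁, φ₂, h₁, h₂, rfl⟩
  refine hφ.not_ge ?_
  simp only [choiForm_add, Finset.sum_add_distrib, h_partialTranspose φ₂]
  exact add_nonneg (Finset.sum_nonneg fun a _ => h₁.choiForm_mul_conjTranspose_nonneg _ _)
    (Finset.sum_nonneg fun b _ => h₂.choiForm_mul_conjTranspose_nonneg _ _)

def choiWitnessU : Fin 10 → Matrix (Fin 3) (Fin 2) ℂ :=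
  ![!![1, 0; 0, 1; -1, -1], !![1, 0; 0, 1; 1, 1], !![1, 0; 0, 1; 1, -1], !![1, 0; 0, 1; -1, 1],
    !![1, 0; 0, 0; 0, 0], !![0, 0; 1, 0; 0, 0], !![0, 0; 0, 0; 1, 0],
    !![0, 0; 4, 0; 0, 0], !![0, 0; 0, 0; 4, 0], !![4, 0; 0, 0; 0, 0]]

def choiWitnessZ : Fin 10 → Matrix (Fin 3) (Fin 2) ℂ :=
  ![!![1, -1; 0, 1; -1, 0], !![1, -1; 0, 1; 1, 0], !![1, 1; 0, 1; 1, 0], !![1, 1; 0, 1; -1, 0],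
    !![0, 0; 1, 0; 0, 0], !![0, 0; 0, 0; 1, 0], !![1, 0; 0, 0; 0, 0],
    !![1, 0; 0, 0; 0, 0], !![0, 0; 1, 0; 0, 0], !![0, 0; 0, 0; 1, 0]]

def choiWitnessU' : Fin 9 → Matrix (Fin 3) (Fin 2) ℂ :=
  ![!![2, 0; 0, 0; 0, 0], !![0, 0; 2, 0; 0, 0], !![0, 0; 0, 0; 2, 0],
    !![1, 0; 0, 4; 0, 0], !![0, 0; 2, 0; 0, 0], !![0, 0; 1, 0; 0, 4],
    !![0, 0; 0, 0; 2, 0], !![0, 4; 0, 0; 1, 0], !![2, 0; 0, 0; 0, 0]]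

def choiWitnessZ' : Fin 9 → Matrix (Fin 3) (Fin 2) ℂ :=
  ![!![1, 0; 0, 0; 0, 0], !![0, 0; 1, 0; 0, 0], !![0, 0; 0, 0; 1, 0],
    !![0, 1; 1, 0; 0, 0], !![1, 0; 0, 0; 0, 0], !![0, 0; 0, 1; 1, 0],
    !![0, 0; 1, 0; 0, 0], !![1, 0; 0, 0; 0, 1], !![0, 0; 0, 0; 1, 0]]

set_option maxHeartbeats 400000 in
theorem choiWitness_partialTranspose
    (ψ : Matrix (Fin 3) (Fin 3) ℂ →ₗ[ℂ] Matrix (Fin 3) (Fin 3) ℂ) :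
    ∑ a, choiForm ψ (choiWitnessU a * (choiWitnessZ a)ᴴ) =
      ∑ b, choiForm (transposeMap 3 ∘ₗ ψ) (choiWitnessU' b * (choiWitnessZ' b)ᴴ) := by
  simp [choiForm, choiWitnessU, choiWitnessZ, choiWitnessU', choiWitnessZ', Fin.sum_univ_succ,
    mul_apply, transposeMap, map_ofNat]
  ring

theorem choiForm_choiMap_choiWitness :
    ∑ a, choiForm choiMap (choiWitnessU a * (choiWitnessZ a)ᴴ) = -9 := by
  simp [choiForm, choiWitnessU, choiWitnessZ, Fin.sum_univ_succ, mul_apply, choiMap,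
    single_apply]
  norm_num

/-- **Atomicity of the Choi map**: the Choi map is not the sum of a 2-positive map and a
2-copositive map. -/
theorem choiMap_atomic :
    ¬ ∃ φ₁ φ₂ : Matrix (Fin 3) (Fin 3) ℂ →ₗ[ℂ] Matrix (Fin 3) (Fin 3) ℂ,
        IsKPositive 2 φ₁ ∧ IsKPositive 2 (transposeMap 3 ∘ₗ φ₂) ∧ choiMap = φ₁ + φ₂ :=
  not_exists_kPositive_add_kCopositive_of_witness choiMap choiWitnessU choiWitnessZ
    choiWitnessU' choiWitnessZ' choiWitness_partialTranspose
    (by rw [choiForm_choiMap_choiWitness]; norm_num)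
end
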